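/- Let (X,d) be a finite ultrametric space with |X| ≥ 3. Then |Sp(X)| = |X| if and only if there exists a cyclic enumeration x₁,...,xₙ of all points of X such that among the n cyclic consecutive distances d(x₁,x₂),...,d(x_{n−1},xₙ), d(xₙ,x₁), exactly two attain the maximum value, and the remaining n−2 distances are strictly positive and pairwise distinct. -/

import Mathlib

/-!
Split a finite ultrametric space at its diameter `M = d a b`: the points at distance `< M` from
`a` form a set `A`, the remaining points a set `B`, and by the strong triangle inequality every
distance between `A` and `B` equals `M`. Hence `Sp(A ∪ B) ⊆ Sp(A) ∪ Sp(B) ∪ {M}`, and as `0` lies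
in both spectra, induction gives the Gomory–Hu bound `|Sp(X)| ≤ |X|`. In the case of equality,
`A` and `B` are extremal too, `Sp(A) ∩ Sp(B) = {0}` and `M ∉ Sp(A) ∪ Sp(B)`; so Hamiltonian paths
of `A` and `B` with pairwise distinct weights, joined by an edge of weight `M`, give such a path of
`X` whose endpoints are at distance `M`, and closing it up gives a characteristic cycle.
Conversely, the `n - 1` distinct positive weights of a characteristic cycle together with `0`
are `n` points of the spectrum, which is all the Gomory–Hu bound allows.
-/

open Finset

section

variable {X : Type*}

section Weights

variable {β : Type*} (d : X → X → β)

def pathWeights (l : List X) : List β := (l.zip l.tail).map fun p => d p.1 p.2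

def cycleWeights (l : List X) : List β := (l.zip (l.rotate 1)).map fun p => d p.1 p.2

@[simp] lemma pathWeights_nil : pathWeights d [] = [] := rfl

@[simp] lemma pathWeights_singleton (x : X) : pathWeights d [x] = [] := rfl

@[simp] lemma pathWeights_cons_cons (x y : X) (l : List X) :
    pathWeights d (x :: y :: l) = d x y :: pathWeights d (y :: l) := rfl

lemma pathWeights_append {l₁ l₂ : List X} {x y : X} (hx : l₁.getLast? = some x)
    (hy : l₂.head? = some y) :
    pathWeights d (l₁ ++ l₂) = pathWeights d l₁ ++ d x y :: pathWeights d l₂ := by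
  induction l₁ with
  | nil => simp at hx
  | cons u t ih =>
    cases t with
    | nil =>
      obtain rfl : u = x := by simpa using hx
      obtain ⟨t, rfl⟩ : ∃ t, l₂ = y :: t := List.head?_eq_some_iff.1 hy
      rfl
    | cons v t =>
      rw [List.getLast?_cons_cons] at hx
      simp only [List.cons_append, pathWeights_cons_cons] at ih ⊢
      rw [ih hx]

lemma cycleWeights_eq {l : List X} {x z : X} (hx : l.head? = some x) (hz : l.getLast? = some z) :
    cycleWeights d l = pathWeights d l ++ [d z x] := by
  obtain ⟨t, rfl⟩ := List.head?_eq_some_iff.1 hx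
  have hrot : (x :: t).rotate 1 = t ++ [x] := by simp [List.rotate_cons_succ]
  calc cycleWeights d (x :: t) = pathWeights d (x :: t ++ [x]) := by
        rw [cycleWeights, pathWeights, hrot, List.cons_append, List.tail_cons,
          ← List.cons_append, ← List.append_nil (t ++ [x]), List.zip_append (by simp)]
        simp
    _ = pathWeights d (x :: t) ++ [d z x] := pathWeights_append d hz rfl

lemma exists_of_mem_pathWeights {l : List X} {r : β} (hr : r ∈ pathWeights d l) :
    ∃ x ∈ l, ∃ y ∈ l, d x y = r := by
  obtain ⟨⟨x, y⟩, hxy, rfl⟩ := List.mem_map.1 hr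
  have hmem := List.of_mem_zip hxy
  exact ⟨x, hmem.1, y, List.mem_of_mem_tail hmem.2, rfl⟩

lemma exists_ne_of_mem_pathWeights {l : List X} (hl : l.Nodup) {r : β}
    (hr : r ∈ pathWeights d l) : ∃ x y, x ≠ y ∧ d x y = r := by
  induction l with
  | nil => simp at hr
  | cons x t ih =>
    cases t with
    | nil => simp at hr
    | cons y t =>
      rw [pathWeights_cons_cons, List.mem_cons] at hr
      rcases hr with rfl | hr
      · exact ⟨x, y, fun h => (List.nodup_cons.1 hl).1 (h ▸ List.mem_cons_self), rfl⟩
      · exact ih hl.of_cons hr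

end Weights

lemma Finset.ssubset_union_left_of_disjoint {α : Type*} [DecidableEq α] {A B : Finset α}
    (h : Disjoint A B) (hB : B.Nonempty) : A ⊂ A ∪ B := by
  obtain ⟨b, hb⟩ := hB
  exact (ssubset_iff_of_subset subset_union_left).2 ⟨b, mem_union_right _ hb, disjoint_right.1 h hb⟩

lemma Finset.ssubset_union_right_of_disjoint {α : Type*} [DecidableEq α] {A B : Finset α}
    (h : Disjoint A B) (hA : A.Nonempty) : B ⊂ A ∪ B :=
  union_comm B A ▸ ssubset_union_left_of_disjoint h.symm hA

lemma List.length_filter_ne_add_count {α : Type*} [DecidableEq α] (L : List α) (a : α) :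
    (L.filter (· ≠ a)).length + L.count a = L.length := by
  rw [List.count_eq_countP, ← List.countP_eq_length_filter,
    List.length_eq_countP_add_countP (· == a)]
  simp [add_comm]

lemma List.card_toFinset_of_nodup_filter_ne {α : Type*} [DecidableEq α] {L : List α} {a : α}
    (ha : a ∈ L) (hL : (L.filter (· ≠ a)).Nodup) :
    L.toFinset.card = L.length - L.count a + 1 := by
  have hlen := L.length_filter_ne_add_count a
  have hsplit : L.toFinset = insert a (L.filter (· ≠ a)).toFinset := by
    ext r
    by_cases hr : r = a <;> simp [hr, ha]
  rw [hsplit, card_insert_of_notMem (by simp), List.toFinset_card_of_nodup hL]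
  omega

def IsCharacteristic (w : List ℝ) : Prop :=
  ∃ M : ℝ, (∀ r ∈ w, r ≤ M) ∧ w.count M = 2 ∧ (w.filter (· ≠ M)).Nodup ∧
    ∀ r ∈ w.filter (· ≠ M), (0 : ℝ) < r

structure IsUltrametric (d : X → X → ℝ) : Prop where
  symm : ∀ x y, d x y = d y x
  eq_zero_iff : ∀ x y, d x y = 0 ↔ x = y
  le_max : ∀ x y z, d x y ≤ max (d x z) (d z y)

noncomputable def distSpectrum (d : X → X → ℝ) (s : Finset X) : Finset ℝ :=
  (s ×ˢ s).image fun p => d p.1 p.2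

variable {d : X → X → ℝ}

lemma mem_distSpectrum {s : Finset X} {x y : X} (hx : x ∈ s) (hy : y ∈ s) :
    d x y ∈ distSpectrum d s :=
  mem_image_of_mem (fun p : X × X => d p.1 p.2) (a := (x, y)) (mem_product.2 ⟨hx, hy⟩)

lemma mem_distSpectrum_of_mem_pathWeights {l : List X} {s : Finset X} (hl : ∀ x ∈ l, x ∈ s)
    {r : ℝ} (hr : r ∈ pathWeights d l) : r ∈ distSpectrum d s := by
  obtain ⟨x, hx, y, hy, rfl⟩ := exists_of_mem_pathWeights d hr
  exact mem_distSpectrum (hl x hx) (hl y hy)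

lemma distSpectrum_union_subset [DecidableEq X] (hsymm : ∀ x y, d x y = d y x)
    {A B : Finset X} {M : ℝ} (hcross : ∀ x ∈ A, ∀ y ∈ B, d x y = M) :
    distSpectrum d (A ∪ B) ⊆ insert M (distSpectrum d A ∪ distSpectrum d B) := by
  intro r hr
  obtain ⟨⟨x, y⟩, hxy, rfl⟩ := mem_image.1 hr
  obtain ⟨hx, hy⟩ := mem_product.1 hxy
  rcases mem_union.1 hx with hx | hx <;> rcases mem_union.1 hy with hy | hy
  · exact mem_insert_of_mem (mem_union_left _ (mem_distSpectrum hx hy))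
  · exact hcross x hx y hy ▸ mem_insert_self _ _
  · exact hsymm x y ▸ hcross y hy x hx ▸ mem_insert_self _ _
  · exact mem_insert_of_mem (mem_union_right _ (mem_distSpectrum hx hy))

namespace IsUltrametric

lemma nonneg (hd : IsUltrametric d) (x y : X) : 0 ≤ d x y := by
  simpa [(hd.eq_zero_iff x x).2 rfl, hd.symm y x] using hd.le_max x x y

lemma pos_of_ne (hd : IsUltrametric d) {x y : X} (h : x ≠ y) : 0 < d x y :=
  (hd.nonneg x y).lt_of_ne fun h0 => h ((hd.eq_zero_iff x y).1 h0.symm)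

lemma pos_of_mem_pathWeights (hd : IsUltrametric d) {l : List X} (hl : l.Nodup) {r : ℝ}
    (hr : r ∈ pathWeights d l) : 0 < r := by
  obtain ⟨x, y, hxy, rfl⟩ := exists_ne_of_mem_pathWeights d hl hr
  exact hd.pos_of_ne hxy

lemma zero_mem_distSpectrum (hd : IsUltrametric d) {s : Finset X} (hs : s.Nonempty) :
    (0 : ℝ) ∈ distSpectrum d s := by
  obtain ⟨x, hx⟩ := hs
  exact (hd.eq_zero_iff x x).2 rfl ▸ mem_distSpectrum hx hx

lemma exists_partition_at_diam [DecidableEq X] (hd : IsUltrametric d) {s : Finset X}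
    (hs : 1 < s.card) :
    ∃ A B : Finset X, ∃ M : ℝ, Disjoint A B ∧ A ∪ B = s ∧ A.Nonempty ∧ B.Nonempty ∧
      (∀ x ∈ A, ∀ y ∈ B, d x y = M) ∧ ∀ x ∈ s, ∀ y ∈ s, d x y ≤ M := by
  obtain ⟨u, hu, v, hv, huv⟩ := one_lt_card.1 hs
  obtain ⟨⟨a, b⟩, hab, hmax⟩ := exists_max_image (s ×ˢ s) (fun p => d p.1 p.2)
    ⟨(u, v), mem_product.2 ⟨hu, hv⟩⟩
  obtain ⟨ha, hb⟩ := mem_product.1 hab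
  have hle : ∀ x ∈ s, ∀ y ∈ s, d x y ≤ d a b := fun x hx y hy =>
    hmax (x, y) (mem_product.2 ⟨hx, hy⟩)
  have hpos : 0 < d a b := (hd.pos_of_ne huv).trans_le (hle u hu v hv)
  refine ⟨s.filter (d a · < d a b), s.filter (¬ d a · < d a b), d a b,
    disjoint_filter_filter_not _ _ _, filter_union_filter_not_eq _ _,
    ⟨a, mem_filter.2 ⟨ha, by rwa [(hd.eq_zero_iff a a).2 rfl]⟩⟩,
    ⟨b, mem_filter.2 ⟨hb, lt_irrefl _⟩⟩, ?_, hle⟩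
  intro x hx y hy
  obtain ⟨hxs, hxa⟩ := mem_filter.1 hx
  obtain ⟨hys, hya⟩ := mem_filter.1 hy
  have hultra : d a y ≤ max (d a x) (d x y) := hd.le_max a y x
  refine (hle x hxs y hys).antisymm (not_lt.1 fun hxy => hya ?_)
  exact hultra.trans_lt (max_lt hxa hxy)

/-- The Gomory–Hu inequality. -/
theorem card_distSpectrum_le (hd : IsUltrametric d) (s : Finset X) :
    (distSpectrum d s).card ≤ s.card := by
  classical
  induction s using Finset.strongInduction with
  | _ s ih =>
    rcases le_or_gt s.card 1 with hs | hs
    · calc (distSpectrum d s).card ≤ (s ×ˢ s).card := card_image_le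
        _ = s.card * s.card := card_product s s
        _ ≤ s.card := mul_le_of_le_one_left (Nat.zero_le _) hs
    obtain ⟨A, B, M, hAB, rfl, hA, hB, hcross, -⟩ := hd.exists_partition_at_diam hs
    have h0 : (0 : ℝ) ∈ distSpectrum d A ∩ distSpectrum d B :=
      mem_inter.2 ⟨hd.zero_mem_distSpectrum hA, hd.zero_mem_distSpectrum hB⟩
    have hcardA := ih A (ssubset_union_left_of_disjoint hAB hB)
    have hcardB := ih B (ssubset_union_right_of_disjoint hAB hA)
    have hinter := card_union_add_card_inter (distSpectrum d A) (distSpectrum d B)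
    have hpos := card_pos.2 ⟨0, h0⟩
    calc (distSpectrum d (A ∪ B)).card
        ≤ (insert M (distSpectrum d A ∪ distSpectrum d B)).card :=
          card_le_card (distSpectrum_union_subset hd.symm hcross)
      _ ≤ (distSpectrum d A ∪ distSpectrum d B).card + 1 := card_insert_le _ _
      _ ≤ A.card + B.card := by omega
      _ = (A ∪ B).card := (card_union_of_disjoint hAB).symm

lemma parts_of_extremal_union [DecidableEq X] (hd : IsUltrametric d) {A B : Finset X} {M : ℝ}
    (hAB : Disjoint A B) (hA : A.Nonempty) (hB : B.Nonempty)
    (hcross : ∀ x ∈ A, ∀ y ∈ B, d x y = M)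
    (hext : (distSpectrum d (A ∪ B)).card = (A ∪ B).card) :
    (distSpectrum d A).card = A.card ∧ (distSpectrum d B).card = B.card ∧
      M ∉ distSpectrum d A ∪ distSpectrum d B ∧
      distSpectrum d A ∩ distSpectrum d B = {0} := by
  have h0 : (0 : ℝ) ∈ distSpectrum d A ∩ distSpectrum d B :=
    mem_inter.2 ⟨hd.zero_mem_distSpectrum hA, hd.zero_mem_distSpectrum hB⟩
  have hsub := card_le_card (distSpectrum_union_subset hd.symm hcross)
  have hcardA := hd.card_distSpectrum_le A
  have hcardB := hd.card_distSpectrum_le B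
  have hinter := card_union_add_card_inter (distSpectrum d A) (distSpectrum d B)
  have hpos := card_pos.2 ⟨0, h0⟩
  rw [hext, card_union_of_disjoint hAB] at hsub
  have hM : M ∉ distSpectrum d A ∪ distSpectrum d B := by
    intro hM
    rw [insert_eq_of_mem hM] at hsub
    omega
  rw [card_insert_of_notMem hM] at hsub
  obtain ⟨c, hc⟩ := card_eq_one.1 (show (distSpectrum d A ∩ distSpectrum d B).card = 1 by omega)
  rw [hc, mem_singleton] at h0
  exact ⟨by omega, by omega, hM, h0 ▸ hc⟩

theorem exists_path_of_extremal [DecidableEq X] (hd : IsUltrametric d) {s : Finset X}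
    (hs : s.Nonempty) (hext : (distSpectrum d s).card = s.card) :
    ∃ (l : List X) (a z : X), l.Nodup ∧ l.toFinset = s ∧ l.head? = some a ∧
      l.getLast? = some z ∧ (pathWeights d l).Nodup ∧ (∀ x ∈ s, ∀ y ∈ s, d x y ≤ d a z) ∧
      (1 < s.card → d a z ∈ pathWeights d l) := by
  induction s using Finset.strongInduction with
  | _ s ih =>
    rcases le_or_gt s.card 1 with hs1 | hs1
    · obtain ⟨a, rfl⟩ := card_eq_one.1 (le_antisymm hs1 (card_pos.2 hs))
      exact ⟨[a], a, a, List.nodup_singleton a, by simp, rfl, rfl, List.nodup_nil, by simp, by simp⟩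
    obtain ⟨A, B, M, hAB, rfl, hA, hB, hcross, hdiam⟩ := hd.exists_partition_at_diam hs1
    obtain ⟨hextA, hextB, hM, hinter⟩ := hd.parts_of_extremal_union hAB hA hB hcross hext
    obtain ⟨lA, a, zA, hlA, hsA, haA, hzA, hwA, -, -⟩ :=
      ih A (ssubset_union_left_of_disjoint hAB hB) hA hextA
    obtain ⟨lB, aB, z, hlB, hsB, haB, hzB, hwB, -, -⟩ :=
      ih B (ssubset_union_right_of_disjoint hAB hA) hB hextB
    have hmemA : ∀ x ∈ lA, x ∈ A := fun x hx => hsA ▸ List.mem_toFinset.2 hx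
    have hmemB : ∀ x ∈ lB, x ∈ B := fun x hx => hsB ▸ List.mem_toFinset.2 hx
    have hspecA r (hr : r ∈ pathWeights d lA) := mem_distSpectrum_of_mem_pathWeights hmemA hr
    have hspecB r (hr : r ∈ pathWeights d lB) := mem_distSpectrum_of_mem_pathWeights hmemB hr
    have hjoin : d zA aB = M :=
      hcross zA (hmemA zA (List.mem_of_getLast? hzA)) aB (hmemB aB (List.mem_of_mem_head? haB))
    have haz : d a z = M :=
      hcross a (hmemA a (List.mem_of_mem_head? haA)) z (hmemB z (List.mem_of_getLast? hzB))
    have hweights : pathWeights d (lA ++ lB) = pathWeights d lA ++ M :: pathWeights d lB := by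
      rw [pathWeights_append d hzA haB, hjoin]
    refine ⟨lA ++ lB, a, z, ?_, by rw [List.toFinset_append, hsA, hsB], by simp [haA],
      by simp [hzB], ?_, haz ▸ hdiam, fun _ => by simp [hweights, haz]⟩
    · exact List.nodup_append.2 ⟨hlA, hlB, fun x hx y hy hxy =>
        disjoint_left.1 hAB (hmemA x hx) (hxy ▸ hmemB y hy)⟩
    · rw [hweights]
      refine List.nodup_append.2 ⟨hwA,
        List.nodup_cons.2 ⟨fun h => hM (mem_union_right _ (hspecB M h)), hwB⟩, ?_⟩
      rintro r hr _ hr' rfl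
      rcases List.mem_cons.1 hr' with rfl | hr'
      · exact hM (mem_union_left _ (hspecA r hr))
      · have h0 : r ∈ distSpectrum d A ∩ distSpectrum d B :=
          mem_inter.2 ⟨hspecA r hr, hspecB r hr'⟩
        rw [hinter, mem_singleton] at h0
        exact (hd.pos_of_mem_pathWeights hlA (h0 ▸ hr)).ne rfl

theorem exists_characteristic_cycle [Fintype X] (hd : IsUltrametric d)
    (hX : 1 < Fintype.card X) (hext : (distSpectrum d univ).card = Fintype.card X) :
    ∃ l : List X, l.Nodup ∧ (∀ x, x ∈ l) ∧ IsCharacteristic (cycleWeights d l) := by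
  classical
  rw [← card_univ] at hX hext
  obtain ⟨l, a, z, hl, hcover, ha, hz, hw, hdiam, hmem⟩ :=
    hd.exists_path_of_extremal (card_pos.1 (by omega)) hext
  have hM := hmem hX
  refine ⟨l, hl, fun x => List.mem_toFinset.1 (hcover ▸ mem_univ x), d a z, ?_, ?_, ?_, ?_⟩ <;>
    rw [cycleWeights_eq d ha hz, hd.symm z a]
  · simp only [List.mem_append, List.mem_singleton]
    rintro r (hr | rfl)
    · obtain ⟨x, -, y, -, rfl⟩ := exists_of_mem_pathWeights d hr
      exact hdiam x (mem_univ x) y (mem_univ y)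
    · exact le_rfl
  · rw [List.count_append, List.count_eq_one_of_mem hw hM]
    simp
  · simpa using hw.filter _
  · intro r hr
    simp only [List.filter_append, List.mem_append, List.mem_filter] at hr
    rcases hr with hr | hr
    · exact hd.pos_of_mem_pathWeights hl hr.1
    · simp at hr

theorem extremal_of_characteristic_cycle [Fintype X] (hd : IsUltrametric d)
    (hX : 3 ≤ Fintype.card X) {l : List X} (hl : l.Nodup) (hcover : ∀ x, x ∈ l)
    (hchar : IsCharacteristic (cycleWeights d l)) :
    (distSpectrum d univ).card = Fintype.card X := by
  classical
  obtain ⟨M, hle, hcount, hnodup, hpos⟩ := hchar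
  set w := cycleWeights d l
  have huniv : l.toFinset = univ := eq_univ_iff_forall.2 fun x => List.mem_toFinset.2 (hcover x)
  have hlen : w.length = Fintype.card X := by
    rw [← card_univ, ← huniv, List.toFinset_card_of_nodup hl]
    simp [w, cycleWeights]
  have hM : M ∈ w := List.count_pos_iff.1 (by omega)
  obtain ⟨r, hr⟩ : ∃ r, r ∈ w.filter (· ≠ M) := List.exists_mem_of_length_pos (by
    have := w.length_filter_ne_add_count M
    omega)
  have hwpos : ∀ r ∈ w, 0 < r := by
    intro r' hr'
    by_cases hr'M : r' = M
    · exact (hpos r hr).trans_le (hr'M ▸ hle r (List.mem_filter.1 hr).1)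
    · exact hpos r' (List.mem_filter.2 ⟨hr', by simpa using hr'M⟩)
  have hsub : insert 0 w.toFinset ⊆ distSpectrum d univ := by
    refine insert_subset (hd.zero_mem_distSpectrum (card_pos.1 ?_)) fun r hr => ?_
    · rw [card_univ]
      omega
    · obtain ⟨⟨x, y⟩, -, rfl⟩ := List.mem_map.1 (List.mem_toFinset.1 hr)
      exact mem_distSpectrum (mem_univ x) (mem_univ y)
  have hcardw := List.card_toFinset_of_nodup_filter_ne hM hnodup
  refine (card_univ (α := X) ▸ hd.card_distSpectrum_le univ).antisymm ?_
  calc Fintype.card X = (insert 0 w.toFinset).card := by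
        rw [card_insert_of_notMem fun h => (hwpos 0 (List.mem_toFinset.1 h)).false, hcardw]
        omega
    _ ≤ (distSpectrum d univ).card := card_le_card hsub

end IsUltrametric

end

theorem extremal_iff_characteristic_hamiltonian_cycle_general {X : Type*} [Fintype X]
    (d : X → X → ℝ)
    (hcard : 3 ≤ Fintype.card X)
    (hsymm : ∀ x y, d x y = d y x)
    (hzero : ∀ x y, d x y = 0 ↔ x = y)
    (hultra : ∀ x y z, d x y ≤ max (d x z) (d z y)) :
    (Finset.univ.image (fun p : X × X => d p.1 p.2)).card = Fintype.card X ↔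
      ∃ l : List X, l.Nodup ∧ (∀ x : X, x ∈ l) ∧
        ∃ M : ℝ,
          (∀ r ∈ (l.zip (l.rotate 1)).map (fun p => d p.1 p.2), r ≤ M) ∧
          ((l.zip (l.rotate 1)).map (fun p => d p.1 p.2)).count M = 2 ∧
          (((l.zip (l.rotate 1)).map (fun p => d p.1 p.2)).filter (· ≠ M)).Nodup ∧
          (∀ r ∈ ((l.zip (l.rotate 1)).map (fun p => d p.1 p.2)).filter (· ≠ M),
            (0 : ℝ) < r) := by
  have hd : IsUltrametric d := ⟨hsymm, hzero, hultra⟩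
  rw [← univ_product_univ]
  exact ⟨hd.exists_characteristic_cycle (by omega),
    fun ⟨l, hl, hcover, hchar⟩ => hd.extremal_of_characteristic_cycle hcard hl hcover hchar⟩

/-- A finite ultrametric space with at least 3 points is extremal for the
Gomory-Hu inequality iff its complete weighted graph contains a characteristic
Hamiltonian cycle: exactly two of the cyclic consecutive distances attain the
maximum, and the remaining ones are positive and pairwise distinct. -/
theorem extremal_iff_characteristic_hamiltonian_cycle {X : Type*} [Fintype X]
    (d : X → X → ℝ)
    (hcard : 3 ≤ Fintype.card X)
    (hnonneg : ∀ x y, 0 ≤ d x y)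
    (hsymm : ∀ x y, d x y = d y x)
    (hzero : ∀ x y, d x y = 0 ↔ x = y)
    (hultra : ∀ x y z, d x y ≤ max (d x z) (d z y)) :
    (Finset.univ.image (fun p : X × X => d p.1 p.2)).card = Fintype.card X ↔
      ∃ l : List X, l.Nodup ∧ (∀ x : X, x ∈ l) ∧
        ∃ M : ℝ,
          (∀ r ∈ (l.zip (l.rotate 1)).map (fun p => d p.1 p.2), r ≤ M) ∧
          ((l.zip (l.rotate 1)).map (fun p => d p.1 p.2)).count M = 2 ∧
          (((l.zip (l.rotate 1)).map (fun p => d p.1 p.2)).filter (· ≠ M)).Nodup ∧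
          (∀ r ∈ ((l.zip (l.rotate 1)).map (fun p => d p.1 p.2)).filter (· ≠ M),
            (0 : ℝ) < r) :=
  extremal_iff_characteristic_hamiltonian_cycle_general d hcard hsymm hzero hultra
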